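/- arXiv:2310.17350 — 7 statements merged into one kernel-verified Lean document; each statement's English description precedes it below -/
import Mathlib

section
/- Let H be a real Hilbert space, let 0<α≤1, let t>0, and let φ:(0,t)→H be square-integrable. Then ∫₀ᵗ ‖(𝓘^α φ)(s)‖² ds ≤ ω_{α+1}(t) · ∫₀ᵗ ω_α(t−s) (∫₀ˢ ‖φ(q)‖² dq) ds. -/
/-!
Cauchy–Schwarz against the kernel gives, for `0 < s ≤ t`,
`‖𝓘^α φ(s)‖² ≤ (∫₀ˢ ω_α) · ∫₀ˢ ω_α(s-q) ‖φ q‖² dq ≤ ω_{α+1}(t) · 𝓘^α(‖φ‖²)(s)`,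
since `∫₀ˢ ω_α = ω_{α+1}(s)` is increasing in `s`. Integrating over `(0,t)` and applying Tonelli on
the triangle `0 < q < s < t`, both `∫₀ᵗ 𝓘^α(‖φ‖²)` and `∫₀ᵗ ω_α(t-s) ∫₀ˢ ‖φ‖²` become
`∫₀ᵗ ω_{α+1}(t-q) ‖φ q‖² dq`. Working with lower Lebesgue integrals throughout avoids having to
know beforehand that `𝓘^α φ` is measurable or square integrable.
-/

open MeasureTheory intervalIntegral

/-- The Riemann–Liouville kernel `ω_α(t) = t^(α-1)/Γ(α)`. -/
noncomputable def rlKernel (α t : ℝ) : ℝ := t ^ (α - 1) / Real.Gamma α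

/-- The Riemann–Liouville fractional integral `(𝓘^α φ)(t) = ∫₀ᵗ ω_α(t-s) φ(s) ds`. -/
noncomputable def fracInt {H : Type*} [NormedAddCommGroup H] [NormedSpace ℝ H]
    (α : ℝ) (φ : ℝ → H) (t : ℝ) : H :=
  ∫ s in (0:ℝ)..t, rlKernel α (t - s) • φ s

open Set
open scoped ENNReal

lemma ofReal_intervalIntegral_eq_setLIntegral {f : ℝ → ℝ} {a b : ℝ} (hab : a ≤ b)
    (hf : IntervalIntegrable f volume a b) (hf_nonneg : ∀ x ∈ Ioo a b, 0 ≤ f x) :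
    ENNReal.ofReal (∫ x in a..b, f x) = ∫⁻ x in Ioo a b, ENNReal.ofReal (f x) := by
  rw [integral_of_le hab, integral_Ioc_eq_integral_Ioo]
  exact ofReal_integral_eq_lintegral_ofReal (hf.1.mono_set Ioo_subset_Ioc_self)
    ((ae_restrict_iff' measurableSet_Ioo).2 (.of_forall hf_nonneg))

lemma lintegral_mul_sq_le {X : Type*} [MeasurableSpace X] {μ : Measure X} {w f : X → ℝ≥0∞}
    (hw : AEMeasurable w μ) (hf : AEMeasurable f μ) :
    (∫⁻ x, w x * f x ∂μ) ^ 2 ≤ (∫⁻ x, w x ∂μ) * ∫⁻ x, w x * f x ^ 2 ∂μ := by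
  have hsqrt : ∀ a b : ℝ≥0∞, a ^ (2⁻¹ : ℝ) * b ^ (2⁻¹ : ℝ) = (a * b) ^ (2⁻¹ : ℝ) :=
    fun a b ↦ (ENNReal.mul_rpow_of_nonneg a b (by norm_num)).symm
  have h : ∫⁻ x, w x ^ (2⁻¹ : ℝ) * (w x * f x ^ 2) ^ (2⁻¹ : ℝ) ∂μ ≤
      (∫⁻ x, w x ∂μ) ^ (2⁻¹ : ℝ) * (∫⁻ x, w x * f x ^ 2 ∂μ) ^ (2⁻¹ : ℝ) :=
    ENNReal.lintegral_mul_norm_pow_le hw (hw.mul (hf.pow_const 2)) (by norm_num) (by norm_num)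
      (by norm_num)
  have hw_mul_f : ∀ x, w x ^ (2⁻¹ : ℝ) * (w x * f x ^ 2) ^ (2⁻¹ : ℝ) = w x * f x := fun x ↦ by
    rw [hsqrt, show w x * (w x * f x ^ 2) = (w x * f x) ^ 2 by ring]
    exact_mod_cast ENNReal.pow_rpow_inv_natCast two_ne_zero _
  simp only [hw_mul_f, hsqrt] at h
  calc (∫⁻ x, w x * f x ∂μ) ^ 2
      ≤ (((∫⁻ x, w x ∂μ) * ∫⁻ x, w x * f x ^ 2 ∂μ) ^ (2⁻¹ : ℝ)) ^ 2 := by gcongr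
    _ = (∫⁻ x, w x ∂μ) * ∫⁻ x, w x * f x ^ 2 ∂μ := by
      exact_mod_cast ENNReal.rpow_inv_natCast_pow two_ne_zero _

lemma setLIntegral_Ioo_Ioo_swap {a b : ℝ} {F : ℝ → ℝ → ℝ≥0∞}
    (hF : AEMeasurable (Function.uncurry F)
      ((volume.restrict (Ioo a b)).prod (volume.restrict (Ioo a b)))) :
    ∫⁻ s in Ioo a b, ∫⁻ q in Ioo a s, F s q = ∫⁻ q in Ioo a b, ∫⁻ s in Ioo q b, F s q := by
  set G : ℝ → ℝ → ℝ≥0∞ := fun s q ↦ {p : ℝ × ℝ | p.2 < p.1}.indicator (Function.uncurry F) (s, q)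
  have hG : AEMeasurable (Function.uncurry G)
      ((volume.restrict (Ioo a b)).prod (volume.restrict (Ioo a b))) :=
    hF.indicator (measurableSet_lt measurable_snd measurable_fst)
  have inner_left : ∀ s ∈ Ioo a b, ∫⁻ q in Ioo a b, G s q = ∫⁻ q in Ioo a s, F s q := by
    intro s hs
    have hG_s : G s = (Iio s).indicator (F s) := by
      ext q; by_cases h : q < s <;> simp [G, h]
    rw [hG_s, lintegral_indicator measurableSet_Iio, Measure.restrict_restrict measurableSet_Iio,
      Iio_inter_Ioo, min_eq_left hs.2.le]
  have inner_right : ∀ q ∈ Ioo a b, ∫⁻ s in Ioo a b, G s q = ∫⁻ s in Ioo q b, F s q := by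
    intro q hq
    have hG_q : (fun s ↦ G s q) = (Ioi q).indicator (fun s ↦ F s q) := by
      ext s; by_cases h : q < s <;> simp [G, h]
    rw [hG_q, lintegral_indicator measurableSet_Ioi, Measure.restrict_restrict measurableSet_Ioi,
      Ioi_inter_Ioo, max_eq_left hq.1.le]
  calc ∫⁻ s in Ioo a b, ∫⁻ q in Ioo a s, F s q
      = ∫⁻ s in Ioo a b, ∫⁻ q in Ioo a b, G s q :=
        (setLIntegral_congr_fun measurableSet_Ioo inner_left).symm
    _ = ∫⁻ q in Ioo a b, ∫⁻ s in Ioo a b, G s q := lintegral_lintegral_swap hG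
    _ = ∫⁻ q in Ioo a b, ∫⁻ s in Ioo q b, F s q := setLIntegral_congr_fun measurableSet_Ioo
        inner_right

section Kernel

variable {α : ℝ}

lemma rlKernel_nonneg (hα : 0 ≤ α) {x : ℝ} (hx : 0 ≤ x) : 0 ≤ rlKernel α x :=
  div_nonneg (Real.rpow_nonneg hx _) (Real.Gamma_nonneg_of_nonneg hα)

@[fun_prop]
lemma measurable_rlKernel (α : ℝ) : Measurable (rlKernel α) := by
  unfold rlKernel; fun_prop

lemma rlKernel_le_rlKernel (hα : 1 ≤ α) {x y : ℝ} (hx : 0 ≤ x) (hxy : x ≤ y) :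
    rlKernel α x ≤ rlKernel α y :=
  div_le_div_of_nonneg_right (Real.rpow_le_rpow hx hxy (by linarith))
    (Real.Gamma_nonneg_of_nonneg (by linarith))

lemma intervalIntegrable_rlKernel (hα : 0 < α) (a b : ℝ) :
    IntervalIntegrable (rlKernel α) volume a b :=
  (intervalIntegrable_rpow' (by linarith)).div_const _

lemma integral_rlKernel (hα : 0 < α) (c : ℝ) :
    ∫ x in (0:ℝ)..c, rlKernel α x = rlKernel (α + 1) c := by
  simp only [rlKernel, intervalIntegral.integral_div]
  rw [integral_rpow (Or.inl (by linarith)), Real.Gamma_add_one hα.ne', sub_add_cancel,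
    add_sub_cancel_right, Real.zero_rpow hα.ne', sub_zero, div_div]

lemma setLIntegral_rlKernel_sub_left (hα : 0 < α) {a b : ℝ} (hab : a ≤ b) :
    ∫⁻ u in Ioo a b, ENNReal.ofReal (rlKernel α (b - u)) =
      ENNReal.ofReal (rlKernel (α + 1) (b - a)) := by
  have h := (intervalIntegrable_rlKernel hα (b - b) (b - a)).comp_sub_left b
  simp only [sub_sub_cancel] at h
  rw [← ofReal_intervalIntegral_eq_setLIntegral hab h.symm
      fun u hu ↦ rlKernel_nonneg hα.le (by linarith [hu.2]),
    integral_comp_sub_left (rlKernel α), sub_self, integral_rlKernel hα]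

lemma setLIntegral_rlKernel_sub_right (hα : 0 < α) {a b : ℝ} (hab : a ≤ b) :
    ∫⁻ u in Ioo a b, ENNReal.ofReal (rlKernel α (u - a)) =
      ENNReal.ofReal (rlKernel (α + 1) (b - a)) := by
  have h := (intervalIntegrable_rlKernel hα (a - a) (b - a)).comp_sub_right a
  simp only [sub_add_cancel] at h
  rw [← ofReal_intervalIntegral_eq_setLIntegral hab h
      fun u hu ↦ rlKernel_nonneg hα.le (by linarith [hu.1]),
    integral_comp_sub_right (rlKernel α), sub_self, integral_rlKernel hα]

end Kernel

section FracInt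

variable {α t : ℝ}

lemma enorm_fracInt_sq_le {H : Type*} [NormedAddCommGroup H] [NormedSpace ℝ H] (hα : 0 < α)
    (ht : 0 ≤ t) {φ : ℝ → H} (hφ : AEStronglyMeasurable φ (volume.restrict (Ioo 0 t))) :
    ‖fracInt α φ t‖ₑ ^ 2 ≤ ENNReal.ofReal (rlKernel (α + 1) t) *
      ∫⁻ q in Ioo 0 t, ENNReal.ofReal (rlKernel α (t - q)) * ‖φ q‖ₑ ^ 2 := by
  have h_enorm :
      ‖fracInt α φ t‖ₑ ≤ ∫⁻ q in Ioo 0 t, ENNReal.ofReal (rlKernel α (t - q)) * ‖φ q‖ₑ := by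
    rw [fracInt, integral_of_le ht, integral_Ioc_eq_integral_Ioo]
    refine (enorm_integral_le_lintegral_enorm _).trans_eq
      (setLIntegral_congr_fun measurableSet_Ioo fun q hq ↦ ?_)
    rw [enorm_smul, Real.enorm_eq_ofReal (rlKernel_nonneg hα.le (by linarith [hq.2]))]
  calc ‖fracInt α φ t‖ₑ ^ 2
      ≤ (∫⁻ q in Ioo 0 t, ENNReal.ofReal (rlKernel α (t - q)) * ‖φ q‖ₑ) ^ 2 := by gcongr
    _ ≤ (∫⁻ q in Ioo 0 t, ENNReal.ofReal (rlKernel α (t - q))) *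
          ∫⁻ q in Ioo 0 t, ENNReal.ofReal (rlKernel α (t - q)) * ‖φ q‖ₑ ^ 2 :=
      lintegral_mul_sq_le (by fun_prop) hφ.enorm
    _ = _ := by rw [setLIntegral_rlKernel_sub_left hα ht, sub_zero]

lemma setLIntegral_enorm_fracInt_sq_le {H : Type*} [NormedAddCommGroup H] [NormedSpace ℝ H]
    (hα : 0 < α) {φ : ℝ → H} (hφ : AEStronglyMeasurable φ (volume.restrict (Ioo 0 t))) :
    ∫⁻ s in Ioo 0 t, ‖fracInt α φ s‖ₑ ^ 2 ≤ ENNReal.ofReal (rlKernel (α + 1) t) *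
      ∫⁻ q in Ioo 0 t, ENNReal.ofReal (rlKernel (α + 1) (t - q)) * ‖φ q‖ₑ ^ 2 := by
  calc ∫⁻ s in Ioo 0 t, ‖fracInt α φ s‖ₑ ^ 2
      ≤ ∫⁻ s in Ioo 0 t, ENNReal.ofReal (rlKernel (α + 1) t) *
          ∫⁻ q in Ioo 0 s, ENNReal.ofReal (rlKernel α (s - q)) * ‖φ q‖ₑ ^ 2 := by
        refine setLIntegral_mono' measurableSet_Ioo fun s hs ↦ ?_
        refine (enorm_fracInt_sq_le hα hs.1.le (hφ.mono_measure
          (Measure.restrict_mono (Ioo_subset_Ioo_right hs.2.le) le_rfl))).trans ?_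
        gcongr
        exact rlKernel_le_rlKernel (by linarith) hs.1.le hs.2.le
    _ = ENNReal.ofReal (rlKernel (α + 1) t) * ∫⁻ q in Ioo 0 t, ∫⁻ s in Ioo q t,
          ENNReal.ofReal (rlKernel α (s - q)) * ‖φ q‖ₑ ^ 2 := by
        rw [lintegral_const_mul' _ _ ENNReal.ofReal_ne_top, setLIntegral_Ioo_Ioo_swap]
        have hK : Measurable fun p : ℝ × ℝ ↦ ENNReal.ofReal (rlKernel α (p.1 - p.2)) := by fun_prop
        exact hK.aemeasurable.mul (hφ.enorm.pow_const 2).comp_snd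
    _ = _ := by
        congr 1
        refine setLIntegral_congr_fun measurableSet_Ioo fun q hq ↦ ?_
        rw [lintegral_mul_const _ (by fun_prop), setLIntegral_rlKernel_sub_right hα hq.2.le]

lemma integral_rlKernel_mul_primitive (hα : 0 < α) (ht : 0 ≤ t) {g : ℝ → ℝ}
    (hg : IntegrableOn g (Ioo 0 t)) (hg_nonneg : ∀ q ∈ Ioo 0 t, 0 ≤ g q) :
    ∫ s in (0:ℝ)..t, rlKernel α (t - s) * ∫ q in (0:ℝ)..s, g q =
      (∫⁻ q in Ioo 0 t,
        ENNReal.ofReal (rlKernel (α + 1) (t - q)) * ENNReal.ofReal (g q)).toReal := by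
  have hG : ContinuousOn (fun s ↦ ∫ q in (0:ℝ)..s, g q) (Icc 0 t) := by
    simpa [uIcc_of_le ht] using continuousOn_primitive_interval'
      ((intervalIntegrable_iff_integrableOn_Ioo_of_le ht).2 hg) left_mem_uIcc
  have h_inner : ∀ s ∈ Ioo 0 t, ENNReal.ofReal (rlKernel α (t - s) * ∫ q in (0:ℝ)..s, g q) =
      ∫⁻ q in Ioo 0 s, ENNReal.ofReal (rlKernel α (t - s)) * ENNReal.ofReal (g q) := by
    intro s hs
    have hgs : IntervalIntegrable g volume 0 s := (intervalIntegrable_iff_integrableOn_Ioo_of_le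
      hs.1.le).2 (hg.mono_set (Ioo_subset_Ioo_right hs.2.le))
    rw [ENNReal.ofReal_mul (rlKernel_nonneg hα.le (by linarith [hs.2])),
      ofReal_intervalIntegral_eq_setLIntegral hs.1.le hgs
        fun q hq ↦ hg_nonneg q ⟨hq.1, hq.2.trans hs.2⟩,
      lintegral_const_mul' _ _ ENNReal.ofReal_ne_top]
  have h_meas : AEStronglyMeasurable (fun s ↦ rlKernel α (t - s) * ∫ q in (0:ℝ)..s, g q)
      (volume.restrict (Ioo 0 t)) :=
    (by fun_prop : Measurable fun s ↦ rlKernel α (t - s)).aestronglyMeasurable.mul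
      ((hG.mono Ioo_subset_Icc_self).aestronglyMeasurable measurableSet_Ioo)
  have hG_nonneg : ∀ s ∈ Ioo 0 t, 0 ≤ ∫ q in (0:ℝ)..s, g q := fun s hs ↦ by
    rw [integral_of_le hs.1.le]
    exact setIntegral_nonneg measurableSet_Ioc fun q hq ↦ hg_nonneg q ⟨hq.1, hq.2.trans_lt hs.2⟩
  have h_nonneg : 0 ≤ᵐ[volume.restrict (Ioo 0 t)]
      fun s ↦ rlKernel α (t - s) * ∫ q in (0:ℝ)..s, g q :=
    (ae_restrict_iff' measurableSet_Ioo).2 (.of_forall fun s hs ↦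
      mul_nonneg (rlKernel_nonneg hα.le (by linarith [hs.2])) (hG_nonneg s hs))
  rw [integral_of_le ht, integral_Ioc_eq_integral_Ioo,
    integral_eq_lintegral_of_nonneg_ae h_nonneg h_meas]
  congr 1
  calc ∫⁻ s in Ioo 0 t, ENNReal.ofReal (rlKernel α (t - s) * ∫ q in (0:ℝ)..s, g q)
      = ∫⁻ s in Ioo 0 t, ∫⁻ q in Ioo 0 s,
          ENNReal.ofReal (rlKernel α (t - s)) * ENNReal.ofReal (g q) :=
        setLIntegral_congr_fun measurableSet_Ioo h_inner
    _ = ∫⁻ q in Ioo 0 t, ∫⁻ s in Ioo q t,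
          ENNReal.ofReal (rlKernel α (t - s)) * ENNReal.ofReal (g q) :=
        setLIntegral_Ioo_Ioo_swap <|
          (by fun_prop : Measurable fun p : ℝ × ℝ ↦ ENNReal.ofReal (rlKernel α (t - p.1)))
            |>.aemeasurable.mul hg.aemeasurable.ennreal_ofReal.comp_snd
    _ = _ := by
        refine setLIntegral_congr_fun measurableSet_Ioo fun q hq ↦ ?_
        rw [lintegral_mul_const _ (by fun_prop), setLIntegral_rlKernel_sub_left hα hq.2.le]

lemma setLIntegral_rlKernel_mul_ne_top (hα : 0 ≤ α) {g : ℝ → ℝ≥0∞}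
    (hg : ∫⁻ q in Ioo 0 t, g q ≠ ∞) :
    ∫⁻ q in Ioo 0 t, ENNReal.ofReal (rlKernel (α + 1) (t - q)) * g q ≠ ∞ := by
  refine ne_top_of_le_ne_top
    (ENNReal.mul_ne_top (ENNReal.ofReal_ne_top (r := rlKernel (α + 1) t)) hg) ?_
  rw [← lintegral_const_mul' _ _ ENNReal.ofReal_ne_top]
  refine setLIntegral_mono' measurableSet_Ioo fun q hq ↦ ?_
  gcongr
  exact rlKernel_le_rlKernel (by linarith) (by linarith [hq.2]) (by linarith [hq.1])

end FracInt

theorem stmt0_general {H : Type*} [NormedAddCommGroup H] [InnerProductSpace ℝ H]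
    (α t : ℝ) (hα : 0 < α) (ht : 0 < t) (φ : ℝ → H)
    (hφ : MemLp φ 2 (volume.restrict (Set.Ioo 0 t))) :
    ∫ s in (0:ℝ)..t, ‖fracInt α φ s‖ ^ 2 ≤
      rlKernel (α + 1) t *
        ∫ s in (0:ℝ)..t, rlKernel α (t - s) * ∫ q in (0:ℝ)..s, ‖φ q‖ ^ 2 := by
  have h_sq : ∀ q, ENNReal.ofReal (‖φ q‖ ^ 2) = ‖φ q‖ₑ ^ 2 := fun q ↦ by
    rw [ENNReal.ofReal_pow (norm_nonneg _), ofReal_norm]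
  have hφ_sq := hφ.norm.integrable_sq
  have h_rhs := integral_rlKernel_mul_primitive hα ht.le hφ_sq fun q _ ↦ sq_nonneg ‖φ q‖
  simp only [h_sq] at h_rhs
  have hQ := setLIntegral_rlKernel_mul_ne_top (t := t) hα.le
    (by simpa only [h_sq] using hφ_sq.lintegral_lt_top.ne)
  rw [h_rhs]
  calc ∫ s in (0:ℝ)..t, ‖fracInt α φ s‖ ^ 2
      ≤ (∫⁻ s in Ioo 0 t, ‖fracInt α φ s‖ₑ ^ 2).toReal := by
        rw [integral_of_le ht.le, integral_Ioc_eq_integral_Ioo]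
        refine (Real.le_norm_self _).trans ((norm_integral_le_lintegral_norm _).trans_eq ?_)
        simp_rw [ofReal_norm, enorm_pow, enorm_norm]
    _ ≤ (ENNReal.ofReal (rlKernel (α + 1) t) *
          ∫⁻ q in Ioo 0 t, ENNReal.ofReal (rlKernel (α + 1) (t - q)) * ‖φ q‖ₑ ^ 2).toReal :=
        ENNReal.toReal_mono (ENNReal.mul_ne_top ENNReal.ofReal_ne_top hQ)
          (setLIntegral_enorm_fracInt_sq_le hα hφ.1)
    _ = _ := by
        rw [ENNReal.toReal_mul, ENNReal.toReal_ofReal (rlKernel_nonneg (by linarith) ht.le)]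

theorem stmt0 {H : Type*} [NormedAddCommGroup H] [InnerProductSpace ℝ H] [CompleteSpace H]
    (α t : ℝ) (hα : 0 < α) (hα1 : α ≤ 1) (ht : 0 < t) (φ : ℝ → H)
    (hφ : MemLp φ 2 (volume.restrict (Set.Ioo 0 t))) :
    ∫ s in (0:ℝ)..t, ‖fracInt α φ s‖ ^ 2 ≤
      rlKernel (α + 1) t *
        ∫ s in (0:ℝ)..t, rlKernel α (t - s) * ∫ q in (0:ℝ)..s, ‖φ q‖ ^ 2 :=
  stmt0_general α t hα ht φ hφ
end

section
/- Generalized Leibniz identity: let H be a real Hilbert space, 0<α<1, and φ∈C¹([0,T];H). Then for every t∈(0,T], ∂_t^α(sφ(s))(t) = t ∂_t^α φ(t) + α (𝓘^{1−α} φ)(t) + t ω_{1−α}(t) φ(0); explicitly, ∫₀ᵗ ω_{1−α}(t−s)·(φ(s)+sφ'(s)) ds = t ∫₀ᵗ ω_{1−α}(t−s) φ'(s) ds + α ∫₀ᵗ ω_{1−α}(t−s) φ(s) ds + t ω_{1−α}(t) φ(0). -/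
/-!
Write `s = t - (t - s)` inside the integral. Since `u ω_β(u) = β ω_{β+1}(u)`, the term
`s φ'(s)` contributes `t 𝓘^β φ' - β 𝓘^{β+1} φ'`, and integrating by parts with
`(ω_{β+1})' = ω_β` gives `𝓘^{β+1} φ' = 𝓘^β φ - ω_{β+1}(t) φ(0)`. With `β = 1 - α` this is the
identity, because `β ω_{β+1}(t) = t ω_β(t)`.
-/

open MeasureTheory intervalIntegral

open Set

lemma rlKernel_add_one (β u : ℝ) : rlKernel (β + 1) u = u ^ β / Real.Gamma (β + 1) := by
  rw [rlKernel, add_sub_cancel_right]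

lemma continuous_rlKernel_add_one {β : ℝ} (hβ : 0 ≤ β) : Continuous (rlKernel (β + 1)) := by
  simp only [funext (rlKernel_add_one β)]
  exact (Real.continuous_rpow_const hβ).div_const _

lemma hasDerivAt_rlKernel_add_one {β u : ℝ} (hβ : β ≠ 0) (hu : u ≠ 0) :
    HasDerivAt (rlKernel (β + 1)) (rlKernel β u) u := by
  rw [funext (rlKernel_add_one β), rlKernel, Real.Gamma_add_one hβ]
  exact ((Real.hasDerivAt_rpow_const (Or.inl hu)).div_const _).congr_deriv
    (mul_div_mul_left _ _ hβ)

lemma mul_rlKernel {β u : ℝ} (hβ : β ≠ 0) (hu : 0 ≤ u) :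
    u * rlKernel β u = β * rlKernel (β + 1) u := by
  have hpow : u ^ β = u * u ^ (β - 1) := by
    conv_lhs => rw [show β = 1 + (β - 1) by ring]
    rw [Real.rpow_add' hu (by simpa using hβ), Real.rpow_one]
  rw [rlKernel_add_one, rlKernel, Real.Gamma_add_one hβ, hpow]
  field_simp

lemma intervalIntegrable_rlKernel_sub {β : ℝ} (hβ : 0 < β) (t : ℝ) :
    IntervalIntegrable (fun s => rlKernel β (t - s)) volume 0 t := by
  have h := ((intervalIntegrable_rpow' (a := t) (b := 0)
    (r := β - 1) (by linarith)).div_const (Real.Gamma β)).comp_sub_left t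
  simpa [rlKernel] using h

section RiemannLiouville

variable {H : Type*} [NormedAddCommGroup H] [NormedSpace ℝ H]

noncomputable def rlIntegral (β : ℝ) (φ : ℝ → H) (t : ℝ) : H :=
  ∫ s in (0:ℝ)..t, rlKernel β (t - s) • φ s

lemma intervalIntegrable_rlKernel_sub_smul {β t : ℝ} (hβ : 0 < β) {φ : ℝ → H}
    (hφ : ContinuousOn φ (uIcc 0 t)) :
    IntervalIntegrable (fun s => rlKernel β (t - s) • φ s) volume 0 t :=
  (intervalIntegrable_rlKernel_sub hβ t).smul_continuousOn hφ

variable [CompleteSpace H]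

theorem rlIntegral_add_one_deriv {β t : ℝ} (hβ : 0 < β) (ht : 0 ≤ t) {φ φ' : ℝ → H}
    (hφ : ContinuousOn φ (uIcc 0 t)) (hderiv : ∀ s ∈ Ioo 0 t, HasDerivAt φ (φ' s) s)
    (hφ' : IntervalIntegrable φ' volume 0 t) :
    rlIntegral (β + 1) φ' t = rlIntegral β φ t - rlKernel (β + 1) t • φ 0 := by
  have hkernel : ∀ s ∈ Ioo (min 0 t) (max 0 t),
      HasDerivAt (fun s => rlKernel (β + 1) (t - s)) (-rlKernel β (t - s)) s := by
    intro s hs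
    rw [min_eq_left ht, max_eq_right ht] at hs
    exact (hasDerivAt_rlKernel_add_one hβ.ne' (sub_ne_zero.2 hs.2.ne')).comp_const_sub t s
  rw [rlIntegral, integral_smul_deriv_eq_deriv_smul_of_hasDerivAt
    ((continuous_rlKernel_add_one hβ.le).comp' (continuous_sub_left t)).continuousOn hφ hkernel
    (fun s hs => hderiv s (by simpa [ht] using hs)) (intervalIntegrable_rlKernel_sub hβ t).neg hφ']
  simp only [sub_self, sub_zero, rlKernel_add_one, Real.zero_rpow hβ.ne', zero_div, zero_smul,
    zero_sub, neg_smul, intervalIntegral.integral_neg, sub_neg_eq_add, rlIntegral]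
  abel

theorem rlIntegral_id_smul_deriv {β t : ℝ} (hβ : 0 < β) (ht : 0 ≤ t) {φ φ' : ℝ → H}
    (hderiv : ∀ s ∈ Icc 0 t, HasDerivAt φ (φ' s) s) (hφ' : ContinuousOn φ' (Icc 0 t)) :
    rlIntegral β (fun s => φ s + s • φ' s) t =
      t • rlIntegral β φ' t + (1 - β) • rlIntegral β φ t + (t * rlKernel β t) • φ 0 := by
  have hφ : ContinuousOn φ (Icc 0 t) := fun s hs => (hderiv s hs).continuousAt.continuousWithinAt
  rw [← uIcc_of_le ht] at hφ hφ'
  have hsplit : ∀ s ∈ uIcc 0 t, rlKernel β (t - s) • (φ s + s • φ' s) =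
      rlKernel β (t - s) • φ s + t • (rlKernel β (t - s) • φ' s)
        - β • (rlKernel (β + 1) (t - s) • φ' s) := by
    intro s hs
    rw [uIcc_of_le ht] at hs
    rw [smul_smul, smul_smul, ← mul_rlKernel hβ.ne' (sub_nonneg.2 hs.2)]
    match_scalars <;> ring
  have h1 := intervalIntegrable_rlKernel_sub_smul hβ hφ
  have h2 := intervalIntegrable_rlKernel_sub_smul hβ hφ'
  have h3 : IntervalIntegrable (fun s => rlKernel (β + 1) (t - s) • φ' s) volume 0 t :=
    ((continuous_rlKernel_add_one hβ.le).comp' (continuous_sub_left t)).intervalIntegrable 0 t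
      |>.smul_continuousOn hφ'
  have h2t : IntervalIntegrable (fun s => t • (rlKernel β (t - s) • φ' s)) volume 0 t :=
    h2.smul t
  have h3β : IntervalIntegrable (fun s => β • (rlKernel (β + 1) (t - s) • φ' s)) volume 0 t :=
    h3.smul β
  have hibp := rlIntegral_add_one_deriv hβ ht hφ
    (fun s hs => hderiv s (Ioo_subset_Icc_self hs)) hφ'.intervalIntegrable
  rw [rlIntegral, integral_congr hsplit, integral_sub (h1.add h2t) h3β, integral_add h1 h2t,
    intervalIntegral.integral_smul, intervalIntegral.integral_smul]
  change rlIntegral β φ t + t • rlIntegral β φ' t - β • rlIntegral (β + 1) φ' t = _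
  rw [hibp, mul_rlKernel hβ.ne' ht]
  module

end RiemannLiouville

theorem stmt4_general {H : Type*} [NormedAddCommGroup H] [InnerProductSpace ℝ H] [CompleteSpace H]
    (α T : ℝ) (hα1 : α < 1)
    (φ φ' : ℝ → H) (hderiv : ∀ s ∈ Set.Icc (0:ℝ) T, HasDerivAt φ (φ' s) s)
    (hcont : ContinuousOn φ' (Set.Icc (0:ℝ) T)) :
    ∀ t ∈ Set.Ioc (0:ℝ) T,
      (∫ s in (0:ℝ)..t, rlKernel (1 - α) (t - s) • (φ s + s • φ' s)) =
        t • (∫ s in (0:ℝ)..t, rlKernel (1 - α) (t - s) • φ' s)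
          + α • (∫ s in (0:ℝ)..t, rlKernel (1 - α) (t - s) • φ s)
          + (t * rlKernel (1 - α) t) • φ 0 := by
  rintro t ⟨ht0, htT⟩
  have hsub : Icc 0 t ⊆ Icc 0 T := Icc_subset_Icc_right htT
  have h := rlIntegral_id_smul_deriv (sub_pos.2 hα1) ht0.le (fun s hs => hderiv s (hsub hs))
    (hcont.mono hsub)
  rwa [sub_sub_cancel] at h

/-- Generalized Leibniz identity for the Caputo derivative `∂_t^α φ = 𝓘^{1-α}(φ')`. -/
theorem stmt4 {H : Type*} [NormedAddCommGroup H] [InnerProductSpace ℝ H] [CompleteSpace H]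
    (α T : ℝ) (hα0 : 0 < α) (hα1 : α < 1) (hT : 0 < T)
    (φ φ' : ℝ → H) (hderiv : ∀ s ∈ Set.Icc (0:ℝ) T, HasDerivAt φ (φ' s) s)
    (hcont : ContinuousOn φ' (Set.Icc (0:ℝ) T)) :
    ∀ t ∈ Set.Ioc (0:ℝ) T,
      (∫ s in (0:ℝ)..t, rlKernel (1 - α) (t - s) • (φ s + s • φ' s)) =
        t • (∫ s in (0:ℝ)..t, rlKernel (1 - α) (t - s) • φ' s)
          + α • (∫ s in (0:ℝ)..t, rlKernel (1 - α) (t - s) • φ s)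
          + (t * rlKernel (1 - α) t) • φ 0 :=
  stmt4_general α T hα1 φ φ' hderiv hcont
end

section
/- Weakly singular Gronwall inequality (continuous version): let 0<α≤1, M≥0 and T>0. There exists a constant C>0, depending only on α, M and T, with the following property: if y:[0,T]→ℝ is continuous and nonnegative, f:[0,T]→ℝ is nonnegative and nondecreasing, and y(t) ≤ f(t) + M∫₀ᵗ (t−s)^{α−1} y(s) ds for all t∈[0,T], then y(t) ≤ C f(t) for all t∈[0,T]. -/
/-!
Bielecki's trick: weight `y` by `exp (-λ s)`. Since
`∫₀ᵗ r ^ (α - 1) * exp (-λ r) dr ≤ Γ(α) / λ ^ α`, for `λ` large the weighted kernel has mass at most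
`1 / (2 M)`. At a point `tₛ ∈ [0, t]` where `y s * exp (-λ s)` is maximal, with maximum `Z`, the
inequality then gives `Z * exp (λ tₛ) ≤ f tₛ + Z * exp (λ tₛ) / 2`, so `Z ≤ 2 f t`, and
`y t ≤ Z * exp (λ t) ≤ 2 exp (λ T) * f t`.
-/

open MeasureTheory intervalIntegral Set Real

theorem integral_rpow_mul_exp_neg_mul_le_Gamma {α lam T : ℝ} (hα : 0 < α) (hlam : 0 < lam)
    (hT : 0 ≤ T) :
    ∫ r in (0:ℝ)..T, r ^ (α - 1) * exp (-(lam * r)) ≤ (1 / lam) ^ α * Gamma α := by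
  rw [integral_of_le hT, ← integral_rpow_mul_exp_neg_mul_Ioi hα hlam]
  refine setIntegral_mono_set ?_ ?_ Ioc_subset_Ioi_self.eventuallyLE
  · exact Integrable.of_integral_ne_zero
      (by rw [integral_rpow_mul_exp_neg_mul_Ioi hα hlam]; positivity)
  · filter_upwards [ae_restrict_mem measurableSet_Ioi] with r hr
    exact mul_nonneg (rpow_nonneg (le_of_lt hr) _) (exp_nonneg _)

theorem exists_mul_integral_rpow_mul_exp_neg_mul_le_half {α M : ℝ} (hα : 0 < α) (hM : 0 ≤ M) :
    ∃ lam > 0, ∀ T, 0 ≤ T →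
      M * ∫ r in (0:ℝ)..T, r ^ (α - 1) * exp (-(lam * r)) ≤ 1 / 2 := by
  set A := 2 * M * Gamma α + 1
  have hA : 0 < A := by positivity
  refine ⟨A ^ (1 / α), by positivity, fun T hT => ?_⟩
  have hpow : (1 / A ^ (1 / α)) ^ α = 1 / A := by
    rw [div_rpow zero_le_one (by positivity), one_rpow, ← rpow_mul hA.le,
      one_div_mul_cancel hα.ne', rpow_one]
  calc M * ∫ r in (0:ℝ)..T, r ^ (α - 1) * exp (-(A ^ (1 / α) * r))
      ≤ M * ((1 / A) * Gamma α) := by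
        rw [← hpow]
        exact mul_le_mul_of_nonneg_left
          (integral_rpow_mul_exp_neg_mul_le_Gamma hα (by positivity) hT) hM
    _ ≤ 1 / 2 := by
        rw [div_mul_eq_mul_div, one_mul, mul_div_assoc', div_le_div_iff₀ hA two_pos]
        linarith

theorem intervalIntegrable_sub_rpow {β t : ℝ} (hβ : -1 < β) :
    IntervalIntegrable (fun s => (t - s) ^ β) volume 0 t := by
  simpa using ((intervalIntegrable_rpow' hβ (a := 0) (b := t)).comp_sub_left t).symm

theorem integral_sub_rpow_mul_le_of_le_mul_exp {α lam Z t : ℝ} {y : ℝ → ℝ} (hα : 0 < α)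
    (ht : 0 ≤ t) (hy : ContinuousOn y (Icc 0 t)) (hyZ : ∀ s ∈ Icc 0 t, y s ≤ Z * exp (lam * s)) :
    ∫ s in (0:ℝ)..t, (t - s) ^ (α - 1) * y s ≤
      Z * exp (lam * t) * ∫ r in (0:ℝ)..t, r ^ (α - 1) * exp (-(lam * r)) := by
  have hK := intervalIntegrable_sub_rpow (t := t) (show -1 < α - 1 by linarith)
  calc ∫ s in (0:ℝ)..t, (t - s) ^ (α - 1) * y s
      ≤ ∫ s in (0:ℝ)..t, (t - s) ^ (α - 1) * (Z * exp (lam * s)) := by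
        refine integral_mono_on ht (hK.mul_continuousOn (by rwa [uIcc_of_le ht]))
          (hK.mul_continuousOn (by fun_prop)) fun s hs => ?_
        exact mul_le_mul_of_nonneg_left (hyZ s hs) (rpow_nonneg (sub_nonneg.2 hs.2) _)
    _ = Z * exp (lam * t) * ∫ s in (0:ℝ)..t, (t - s) ^ (α - 1) * exp (-(lam * (t - s))) := by
        rw [← intervalIntegral.integral_const_mul]
        congr 1 with s
        rw [show lam * s = lam * t + -(lam * (t - s)) by ring, exp_add]
        ring
    _ = Z * exp (lam * t) * ∫ r in (0:ℝ)..t, r ^ (α - 1) * exp (-(lam * r)) := by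
        rw [integral_comp_sub_left (fun r => r ^ (α - 1) * exp (-(lam * r)))]
        simp

theorem le_two_mul_exp_mul_of_le_add_integral {α M T lam t : ℝ} {y f : ℝ → ℝ} (hα : 0 < α)
    (hM : 0 ≤ M) (hlam : 0 ≤ lam)
    (hmass : ∀ t ∈ Icc 0 T, M * ∫ r in (0:ℝ)..t, r ^ (α - 1) * exp (-(lam * r)) ≤ 1 / 2)
    (hy : ContinuousOn y (Icc 0 T)) (hy0 : ∀ t ∈ Icc 0 T, 0 ≤ y t) (hf : MonotoneOn f (Icc 0 T))
    (hyf : ∀ t ∈ Icc 0 T, y t ≤ f t + M * ∫ s in (0:ℝ)..t, (t - s) ^ (α - 1) * y s)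
    (ht : t ∈ Icc 0 T) :
    y t ≤ 2 * exp (lam * t) * f t := by
  have hsub : Icc 0 t ⊆ Icc 0 T := Icc_subset_Icc_right ht.2
  obtain ⟨ts, hts, hmax⟩ := isCompact_Icc.exists_isMaxOn (nonempty_Icc.2 ht.1)
    ((hy.mono hsub).mul (by fun_prop : Continuous fun s => exp (-(lam * s))).continuousOn)
  set Z := y ts * exp (-(lam * ts))
  have hyZ : ∀ s ∈ Icc 0 t, y s ≤ Z * exp (lam * s) := fun s hs => by
    have : y s * exp (-(lam * s)) ≤ Z := hmax hs
    rwa [exp_neg, ← div_eq_mul_inv, div_le_iff₀ (exp_pos _)] at this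
  have hZ : Z * exp (lam * ts) = y ts := by
    rw [mul_assoc, ← exp_add, neg_add_cancel, exp_zero, mul_one]
  have hts' : ts ∈ Icc 0 T := hsub hts
  have hconv := integral_sub_rpow_mul_le_of_le_mul_exp hα hts.1
    (hy.mono ((Icc_subset_Icc_right hts.2).trans hsub)) fun s hs => hyZ s ⟨hs.1, hs.2.trans hts.2⟩
  have hhalf : M * ∫ s in (0:ℝ)..ts, (ts - s) ^ (α - 1) * y s ≤ y ts / 2 := by
    calc M * ∫ s in (0:ℝ)..ts, (ts - s) ^ (α - 1) * y s
        ≤ M * (y ts * ∫ r in (0:ℝ)..ts, r ^ (α - 1) * exp (-(lam * r))) := by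
          rw [← hZ]; exact mul_le_mul_of_nonneg_left hconv hM
      _ = y ts * (M * ∫ r in (0:ℝ)..ts, r ^ (α - 1) * exp (-(lam * r))) := by ring
      _ ≤ y ts * (1 / 2) := mul_le_mul_of_nonneg_left (hmass ts hts') (hy0 ts hts')
      _ = y ts / 2 := by ring
  have hZf : Z ≤ 2 * f t :=
    calc Z ≤ y ts := mul_le_of_le_one_right (hy0 ts hts')
          (exp_le_one_iff.2 (neg_nonpos.2 (mul_nonneg hlam hts.1)))
      _ ≤ 2 * f ts := by linarith [hyf ts hts']
      _ ≤ 2 * f t := by linarith [hf hts' ht hts.2]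
  calc y t ≤ Z * exp (lam * t) := hyZ t (right_mem_Icc.2 ht.1)
    _ ≤ 2 * f t * exp (lam * t) := mul_le_mul_of_nonneg_right hZf (exp_nonneg _)
    _ = 2 * exp (lam * t) * f t := by ring

theorem stmt10_general (α M T : ℝ) (hα0 : 0 < α) (hM : 0 ≤ M) :
    ∃ C > 0, ∀ y f : ℝ → ℝ,
      ContinuousOn y (Set.Icc 0 T) →
      (∀ t ∈ Set.Icc (0:ℝ) T, 0 ≤ y t) →
      (∀ t ∈ Set.Icc (0:ℝ) T, 0 ≤ f t) →
      (∀ s ∈ Set.Icc (0:ℝ) T, ∀ t ∈ Set.Icc (0:ℝ) T, s ≤ t → f s ≤ f t) →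
      (∀ t ∈ Set.Icc (0:ℝ) T,
        y t ≤ f t + M * ∫ s in (0:ℝ)..t, (t - s) ^ (α - 1) * y s) →
      ∀ t ∈ Set.Icc (0:ℝ) T, y t ≤ C * f t := by
  obtain ⟨lam, hlam, hmass⟩ := exists_mul_integral_rpow_mul_exp_neg_mul_le_half hα0 hM
  refine ⟨2 * exp (lam * T), by positivity, fun y f hy hy0 hf0 hf hyf t ht => ?_⟩
  calc y t ≤ 2 * exp (lam * t) * f t :=
        le_two_mul_exp_mul_of_le_add_integral hα0 hM hlam.le (fun t ht => hmass t ht.1)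
          hy hy0 hf hyf ht
    _ ≤ 2 * exp (lam * T) * f t := by
        gcongr
        exacts [hf0 t ht, ht.2]

/-- Weakly singular Gronwall inequality (continuous version). -/
theorem stmt10 (α M T : ℝ) (hα0 : 0 < α) (hα1 : α ≤ 1) (hM : 0 ≤ M) (hT : 0 < T) :
    ∃ C > 0, ∀ y f : ℝ → ℝ,
      ContinuousOn y (Set.Icc 0 T) →
      (∀ t ∈ Set.Icc (0:ℝ) T, 0 ≤ y t) →
      (∀ t ∈ Set.Icc (0:ℝ) T, 0 ≤ f t) →
      (∀ s ∈ Set.Icc (0:ℝ) T, ∀ t ∈ Set.Icc (0:ℝ) T, s ≤ t → f s ≤ f t) →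
      (∀ t ∈ Set.Icc (0:ℝ) T,
        y t ≤ f t + M * ∫ s in (0:ℝ)..t, (t - s) ^ (α - 1) * y s) →
      ∀ t ∈ Set.Icc (0:ℝ) T, y t ≤ C * f t :=
  stmt10_general α M T hα0 hM
end

section
/- Discrete Leibniz identity for convolution quadrature: let α∈ℝ, τ>0, n≥1 an integer, and U_0,…,U_n elements of a real vector space; write t_j=jτ and let (tU) denote the sequence (t_j U_j)_{j≥0}. Then t_n (∂_τ^α U)^n = (∂_τ^α (tU))^n − α (∂_τ^{α−1} U)^{n−1}; explicitly, t_n τ^{−α} Σ_{j=0}^n a_{n−j}^{(α)} U_j = τ^{−α} Σ_{j=0}^n a_{n−j}^{(α)} t_j U_j − α τ^{1−α} Σ_{j=0}^{n−1} a_{n−1−j}^{(α−1)} U_j. -/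
/-- The convolution quadrature weight `a_j^{(β)} = (-1)^j (β choose j)`, where
`(β choose j) = β(β-1)⋯(β-j+1)/j!` is the generalized binomial coefficient. -/
noncomputable def cqWeight (β : ℝ) (j : ℕ) : ℝ :=
  (-1) ^ j * ((∏ i ∈ Finset.range j, (β - i)) / (j.factorial : ℝ))

/-!
Differentiating `(1 - ξ)^β = Σ a_j^{(β)} ξ^j` gives the recurrence
`(m + 1) a_{m+1}^{(β)} = -β a_m^{(β-1)}`. Since `t_j - t_n = -(n - j) τ`, the difference
`(∂_τ^α (tU))^n - t_n (∂_τ^α U)^n` is `τ^{1-α} Σ_j (j - n) a_{n-j}^{(α)} U_j`, and the recurrence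
turns this into `α (∂_τ^{α-1} U)^{n-1}`; the term `j = n` drops out.
-/

open Finset

theorem succ_mul_cqWeight_succ (β : ℝ) (m : ℕ) :
    ((m : ℝ) + 1) * cqWeight β (m + 1) = -β * cqWeight (β - 1) m := by
  have shift : ∏ i ∈ range m, (β - ((i : ℝ) + 1)) = ∏ i ∈ range m, (β - 1 - i) :=
    prod_congr rfl fun i _ => by ring
  simp only [cqWeight, prod_range_succ', Nat.factorial_succ, Nat.cast_mul,
    Nat.cast_succ, CharP.cast_eq_zero, sub_zero, pow_succ, shift]
  have : (m.factorial : ℝ) ≠ 0 := by positivity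
  field_simp

theorem sum_sub_mul_cqWeight_smul {V : Type*} [AddCommGroup V] [Module ℝ V]
    (α : ℝ) (n : ℕ) (U : ℕ → V) :
    ∑ j ∈ range (n + 1), (((n : ℝ) - j) * cqWeight α (n - j)) • U j =
      -α • ∑ j ∈ range n, cqWeight (α - 1) (n - 1 - j) • U j := by
  rw [sum_range_succ, sub_self, zero_mul, zero_smul, add_zero, smul_sum]
  refine sum_congr rfl fun j hj => ?_
  obtain ⟨m, rfl⟩ : ∃ m, n = j + m + 1 := Nat.exists_eq_add_of_lt (mem_range.mp hj)
  rw [smul_smul, show j + m + 1 - j = m + 1 by omega, show j + m + 1 - 1 - j = m by omega,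
    ← succ_mul_cqWeight_succ]
  push_cast
  ring_nf

theorem natCast_smul_sum_cqWeight_smul {V : Type*} [AddCommGroup V] [Module ℝ V]
    (α : ℝ) (n : ℕ) (U : ℕ → V) :
    (n : ℝ) • ∑ j ∈ range (n + 1), cqWeight α (n - j) • U j =
      ∑ j ∈ range (n + 1), cqWeight α (n - j) • ((j : ℝ) • U j)
        - α • ∑ j ∈ range n, cqWeight (α - 1) (n - 1 - j) • U j := by
  have hdiff : ∑ j ∈ range (n + 1), cqWeight α (n - j) • ((j : ℝ) • U j)
      - (n : ℝ) • ∑ j ∈ range (n + 1), cqWeight α (n - j) • U j =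
      α • ∑ j ∈ range n, cqWeight (α - 1) (n - 1 - j) • U j := by
    refine neg_injective ?_
    rw [← neg_smul, ← sum_sub_mul_cqWeight_smul, smul_sum, ← sum_sub_distrib, ← sum_neg_distrib]
    exact sum_congr rfl fun j _ => by module
  rw [← hdiff, sub_sub_cancel]

theorem stmt11_general {V : Type*} [AddCommGroup V] [Module ℝ V]
    (α τ : ℝ) (hτ : 0 < τ) (n : ℕ) (U : ℕ → V) :
    ((n : ℝ) * τ) • (τ ^ (-α) • ∑ j ∈ Finset.range (n + 1), cqWeight α (n - j) • U j) =
      τ ^ (-α) • (∑ j ∈ Finset.range (n + 1), cqWeight α (n - j) • (((j : ℝ) * τ) • U j))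
        - α • (τ ^ (1 - α) •
            ∑ j ∈ Finset.range n, cqWeight (α - 1) (n - 1 - j) • U j) := by
  have hpow : τ ^ (1 - α) = τ ^ (-α) * τ := by
    rw [sub_eq_neg_add, Real.rpow_add hτ, Real.rpow_one]
  have hscale : ∑ j ∈ range (n + 1), cqWeight α (n - j) • (((j : ℝ) * τ) • U j) =
      τ • ∑ j ∈ range (n + 1), cqWeight α (n - j) • ((j : ℝ) • U j) := by
    rw [smul_sum]
    exact sum_congr rfl fun j _ => by module
  rw [hscale, hpow]
  linear_combination (norm := module) (τ ^ (-α) * τ) • natCast_smul_sum_cqWeight_smul α n U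

/-- Discrete Leibniz identity for the backward-Euler convolution quadrature
`(∂_τ^β V)^n = τ^{-β} Σ_{j=0}^n a_{n-j}^{(β)} V_j`:
`t_n (∂_τ^α U)^n = (∂_τ^α (tU))^n - α (∂_τ^{α-1} U)^{n-1}`. -/
theorem stmt11 {V : Type*} [AddCommGroup V] [Module ℝ V]
    (α τ : ℝ) (hτ : 0 < τ) (n : ℕ) (hn : 1 ≤ n) (U : ℕ → V) :
    ((n : ℝ) * τ) • (τ ^ (-α) • ∑ j ∈ Finset.range (n + 1), cqWeight α (n - j) • U j) =
      τ ^ (-α) • (∑ j ∈ Finset.range (n + 1), cqWeight α (n - j) • (((j : ℝ) * τ) • U j))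
        - α • (τ ^ (1 - α) •
            ∑ j ∈ Finset.range n, cqWeight (α - 1) (n - 1 - j) • U j) :=
  stmt11_general α τ hτ n U
end

section
/- Discrete positive definiteness of the convolution quadrature weights: let H be a real inner product space, 0<α<1, τ>0, n≥0, and v_0,…,v_n ∈ H. Then (τ^α/2) Σ_{j=0}^n ‖v_j‖² ≤ Σ_{j=0}^n ⟨(∂_τ^{−α} v)^j, v_j⟩, i.e. Σ_{j=0}^n Σ_{i=0}^j a_{j−i}^{(−α)} ⟨v_i, v_j⟩ ≥ (1/2) Σ_{j=0}^n ‖v_j‖². -/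
/-!
For `0 < α < 1` the weights `b k = a_k^{(-α)} = α(α+1)⋯(α+k-1)/k!` are positive, decreasing
and convex. On `{0, …, N}` such a sequence is a nonnegative combination of the constant `1` and
of the tents `k ↦ (r - k)₊` (summation by parts twice). The Toeplitz form
`Σ_{i,j<N} b |i-j| ⟪v i, v j⟫` of the constant is `‖Σ v i‖²`, and that of a tent is the sum of
the squared norms of the window sums `Σ_{t-r < i ≤ t} v i`, since two windows of length `r`
starting at `i` and `j` overlap in `r - |i-j|` points. Hence the symmetric form is nonnegative,
and it equals twice the lower-triangular sum of the statement minus `b 0 Σ ‖v j‖²`, with `b 0 = 1`.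
-/

open RealInnerProductSpace

open Finset

lemma cqWeight_neg_eq (α : ℝ) (j : ℕ) :
    cqWeight (-α) j = (∏ i ∈ range j, (α + i)) / j.factorial := by
  have h : ∏ i ∈ range j, (-α - i) = (-1) ^ j * ∏ i ∈ range j, (α + i) := by
    simp_rw [← neg_add', prod_neg, card_range]
  rw [cqWeight, h, ← mul_div_assoc, ← mul_assoc, ← mul_pow]
  norm_num

@[simp]
lemma cqWeight_neg_zero (α : ℝ) : cqWeight (-α) 0 = 1 := by
  simp [cqWeight_neg_eq]

lemma cqWeight_neg_pos {α : ℝ} (hα : 0 < α) (j : ℕ) : 0 < cqWeight (-α) j := by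
  rw [cqWeight_neg_eq]
  exact div_pos (prod_pos fun i _ => by positivity) (by positivity)

lemma cqWeight_neg_succ (α : ℝ) (j : ℕ) :
    cqWeight (-α) (j + 1) = cqWeight (-α) j * ((α + j) / (j + 1)) := by
  rw [cqWeight_neg_eq, cqWeight_neg_eq, prod_range_succ, Nat.factorial_succ]
  push_cast
  field_simp

lemma cqWeight_neg_sub_succ (α : ℝ) (j : ℕ) :
    cqWeight (-α) j - cqWeight (-α) (j + 1) = cqWeight (-α) j * ((1 - α) / (j + 1)) := by
  rw [cqWeight_neg_succ]
  field_simp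
  ring

lemma cqWeight_neg_sub_succ_nonneg {α : ℝ} (hα0 : 0 < α) (hα1 : α < 1) (j : ℕ) :
    0 ≤ cqWeight (-α) j - cqWeight (-α) (j + 1) := by
  rw [cqWeight_neg_sub_succ]
  exact mul_nonneg (cqWeight_neg_pos hα0 j).le (div_nonneg (by linarith) (by positivity))

lemma cqWeight_neg_convex {α : ℝ} (hα0 : 0 < α) (hα1 : α < 1) (j : ℕ) :
    0 ≤ (cqWeight (-α) j - cqWeight (-α) (j + 1))
      - (cqWeight (-α) (j + 1) - cqWeight (-α) (j + 2)) := by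
  have h : (cqWeight (-α) j - cqWeight (-α) (j + 1))
      - (cqWeight (-α) (j + 1) - cqWeight (-α) (j + 2))
      = cqWeight (-α) j * ((1 - α) * (2 - α) / ((j + 1) * (j + 2))) := by
    rw [cqWeight_neg_sub_succ, cqWeight_neg_sub_succ, cqWeight_neg_succ]
    push_cast
    field_simp
    ring
  rw [h]
  exact mul_nonneg (cqWeight_neg_pos hα0 j).le
    (div_nonneg (mul_nonneg (by linarith) (by linarith)) (by positivity))

lemma sum_range_sum_range_eq_of_symm {M : Type*} [AddCommGroup M] (f : ℕ → ℕ → M)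
    (hf : ∀ i j, f i j = f j i) (N : ℕ) :
    ∑ j ∈ range N, ∑ i ∈ range N, f i j
      = 2 • ∑ j ∈ range N, ∑ i ∈ range (j + 1), f i j - ∑ j ∈ range N, f j j := by
  induction N with
  | zero => simp
  | succ N ih =>
    have hrow : ∑ j ∈ range N, f N j = ∑ i ∈ range N, f i N := sum_congr rfl fun j _ => hf N j
    simp only [sum_range_succ _ N, sum_add_distrib, ih, hrow]
    abel

def tent (r k : ℕ) : ℝ := (r - k : ℕ)

lemma eq_add_sum_mul_tent (b : ℕ → ℝ) {k m : ℕ} (hkm : k ≤ m) :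
    b k = b m + (b m - b (m + 1)) * tent m k
      + ∑ s ∈ range m, ((b s - b (s + 1)) - (b (s + 1) - b (s + 2))) * tent (s + 1) k := by
  unfold tent
  induction m, hkm using Nat.le_induction with
  | base =>
    rw [Nat.sub_self, sum_eq_zero fun s hs => by simp [Nat.sub_eq_zero_of_le (mem_range.mp hs)]]
    simp
  | succ m hkm ih =>
    rw [ih, sum_range_succ, Nat.sub_add_comm hkm]
    push_cast
    ring

section ToeplitzForm

variable {H : Type*} [NormedAddCommGroup H] [InnerProductSpace ℝ H]

lemma sum_norm_sq_sum_ite_mem {ι κ : Type*} [DecidableEq κ] (s : Finset ι) (T : Finset κ)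
    (W : ι → Finset κ) (hW : ∀ i ∈ s, W i ⊆ T) (v : ι → H) :
    ∑ t ∈ T, ‖∑ i ∈ s, if t ∈ W i then v i else 0‖ ^ 2
      = ∑ i ∈ s, ∑ j ∈ s, (#(W i ∩ W j) : ℝ) * ⟪v i, v j⟫ := by
  have hterm : ∀ t i j, ⟪if t ∈ W i then v i else 0, if t ∈ W j then v j else 0⟫
      = if t ∈ W i ∩ W j then ⟪v i, v j⟫ else 0 := by
    intro t i j
    split_ifs <;> simp_all
  have hcard : ∀ i ∈ s, ∀ j ∈ s,
      ∑ t ∈ T, (if t ∈ W i ∩ W j then ⟪v i, v j⟫ else 0) = #(W i ∩ W j) * ⟪v i, v j⟫ := by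
    intro i hi j _
    rw [sum_ite_mem, inter_eq_right.mpr (inter_subset_left.trans (hW i hi)), sum_const,
      nsmul_eq_mul]
  simp_rw [← real_inner_self_eq_norm_sq, sum_inner, inner_sum, hterm]
  rw [sum_comm]
  exact sum_congr rfl fun i hi => by rw [sum_comm]; exact sum_congr rfl (hcard i hi)

lemma card_Ico_inter_Ico_add (i j r : ℕ) :
    #(Ico i (i + r) ∩ Ico j (j + r)) = r - Nat.dist i j := by
  rw [Ico_inter_Ico, Nat.card_Ico, Nat.dist]
  omega

noncomputable def toeplitzForm (N : ℕ) (v : ℕ → H) : (ℕ → ℝ) →ₗ[ℝ] ℝ where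
  toFun b := ∑ i ∈ range N, ∑ j ∈ range N, b (Nat.dist i j) * ⟪v i, v j⟫
  map_add' b b' := by simp only [Pi.add_apply, add_mul, sum_add_distrib]
  map_smul' c b := by
    simp only [Pi.smul_apply, smul_eq_mul, mul_assoc, mul_sum, RingHom.id_apply]

lemma toeplitzForm_apply (N : ℕ) (v : ℕ → H) (b : ℕ → ℝ) :
    toeplitzForm N v b = ∑ i ∈ range N, ∑ j ∈ range N, b (Nat.dist i j) * ⟪v i, v j⟫ := rfl

lemma toeplitzForm_congr {N : ℕ} (v : ℕ → H) {b b' : ℕ → ℝ} (h : ∀ k < N, b k = b' k) :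
    toeplitzForm N v b = toeplitzForm N v b' := by
  simp only [toeplitzForm_apply]
  refine sum_congr rfl fun i hi => sum_congr rfl fun j hj => ?_
  rw [mem_range] at hi hj
  rw [h _ (by rw [Nat.dist]; omega)]

lemma toeplitzForm_one (N : ℕ) (v : ℕ → H) :
    toeplitzForm N v 1 = ‖∑ i ∈ range N, v i‖ ^ 2 := by
  simp only [toeplitzForm_apply, Pi.one_apply, one_mul]
  rw [← real_inner_self_eq_norm_sq, sum_inner]
  simp_rw [inner_sum]

lemma toeplitzForm_tent (N r : ℕ) (v : ℕ → H) :
    toeplitzForm N v (tent r)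
      = ∑ t ∈ range (N + r), ‖∑ i ∈ range N, if t ∈ Ico i (i + r) then v i else 0‖ ^ 2 := by
  rw [sum_norm_sq_sum_ite_mem _ _ _ fun i hi => ?_]
  · simp [toeplitzForm_apply, tent, card_Ico_inter_Ico_add]
  · intro t ht
    simp only [mem_Ico, mem_range] at ht hi ⊢
    omega

lemma toeplitzForm_nonneg_of_convex (N : ℕ) (v : ℕ → H) {b : ℕ → ℝ} (hb : 0 ≤ b N)
    (hd : b (N + 1) ≤ b N) (hconv : ∀ s < N, b (s + 1) - b (s + 2) ≤ b s - b (s + 1)) :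
    0 ≤ toeplitzForm N v b := by
  set e : ℕ → ℝ := fun s => (b s - b (s + 1)) - (b (s + 1) - b (s + 2))
  have hb' : ∀ k < N, b k = (b N • 1 + (b N - b (N + 1)) • tent N
      + ∑ s ∈ range N, e s • tent (s + 1) : ℕ → ℝ) k := fun k hk => by
    simpa using eq_add_sum_mul_tent b hk.le
  rw [toeplitzForm_congr v hb']
  simp only [map_add, map_smul, map_sum, toeplitzForm_one]
  refine add_nonneg (add_nonneg (by positivity) (smul_nonneg (by linarith) ?_))
    (sum_nonneg fun s hs => smul_nonneg (sub_nonneg.mpr (hconv s (mem_range.mp hs))) ?_)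
  all_goals rw [toeplitzForm_tent]; positivity

lemma toeplitzForm_eq_two_mul_sub (N : ℕ) (v : ℕ → H) (b : ℕ → ℝ) :
    toeplitzForm N v b = 2 * ∑ j ∈ range N, ∑ i ∈ range (j + 1), b (j - i) * ⟪v i, v j⟫
      - b 0 * ∑ j ∈ range N, ‖v j‖ ^ 2 := by
  rw [toeplitzForm_apply, sum_comm, sum_range_sum_range_eq_of_symm _
    (fun i j => by rw [Nat.dist_comm, real_inner_comm]), nsmul_eq_mul, mul_sum (a := b 0)]
  congr 2
  · refine sum_congr rfl fun j _ => sum_congr rfl fun i hi => ?_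
    rw [Nat.dist_eq_sub_of_le (Nat.lt_succ_iff.mp (mem_range.mp hi))]
  · simp

lemma sum_norm_sq_le_two_mul_sum_cqWeight_neg {α : ℝ} (hα0 : 0 < α) (hα1 : α < 1) (N : ℕ)
    (v : ℕ → H) :
    ∑ j ∈ range N, ‖v j‖ ^ 2
      ≤ 2 * ∑ j ∈ range N, ∑ i ∈ range (j + 1), cqWeight (-α) (j - i) * ⟪v i, v j⟫ := by
  have h := toeplitzForm_nonneg_of_convex N v (cqWeight_neg_pos hα0 N).le
    (sub_nonneg.mp (cqWeight_neg_sub_succ_nonneg hα0 hα1 N))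
    (fun s _ => sub_nonneg.mp (cqWeight_neg_convex hα0 hα1 s))
  rw [toeplitzForm_eq_two_mul_sub, cqWeight_neg_zero, one_mul] at h
  linarith

end ToeplitzForm

/-- Discrete positive definiteness of the convolution quadrature weights:
`(τ^α/2) Σ_{j=0}^n ‖v_j‖² ≤ Σ_{j=0}^n ⟨(∂_τ^{-α} v)^j, v_j⟩`. -/
theorem stmt12 {H : Type*} [NormedAddCommGroup H] [InnerProductSpace ℝ H]
    (α τ : ℝ) (hα0 : 0 < α) (hα1 : α < 1) (hτ : 0 < τ) (n : ℕ) (v : ℕ → H) :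
    τ ^ α / 2 * ∑ j ∈ Finset.range (n + 1), ‖v j‖ ^ 2 ≤
      ∑ j ∈ Finset.range (n + 1),
        ⟪τ ^ α • ∑ i ∈ Finset.range (j + 1), cqWeight (-α) (j - i) • v i, v j⟫ := by
  simp_rw [real_inner_smul_left, sum_inner, real_inner_smul_left, ← mul_sum]
  calc τ ^ α / 2 * ∑ j ∈ range (n + 1), ‖v j‖ ^ 2
      ≤ τ ^ α / 2 * (2 * ∑ j ∈ range (n + 1), ∑ i ∈ range (j + 1),
          cqWeight (-α) (j - i) * ⟪v i, v j⟫) := by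
        gcongr
        exact sum_norm_sq_le_two_mul_sum_cqWeight_neg hα0 hα1 (n + 1) v
    _ = _ := by ring
end

section
/- Discrete Alikhanov-type inequality for convolution quadrature: let H be a real inner product space, 0<α<1, τ>0, n≥0, and v_0,…,v_n ∈ H. Then (1/2)(∂_τ^α g)^n ≤ ⟨(∂_τ^α v)^n, v_n⟩ where g_j=‖v_j‖²; explicitly, Σ_{j=0}^n a_{n−j}^{(α)} ‖v_j‖² ≤ 2 Σ_{j=0}^n a_{n−j}^{(α)} ⟨v_j, v_n⟩. -/
/-!
Since `2⟪v_j, v_n⟫ - ‖v_j‖² = ‖v_n‖² - ‖v_j - v_n‖²`, the difference of the two sides is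
`(Σ_{k ≤ n} a_k) ‖v_n‖² - Σ_{j < n} a_{n-j} ‖v_j - v_n‖²`. For `0 ≤ α ≤ 1` every weight
`a_k^{(α)}` with `k ≥ 1` is nonpositive, and by Pascal's rule the partial sum `Σ_{k ≤ n} a_k^{(α)}`
equals `a_n^{(α-1)}`, which is nonnegative because all factors of `∏_{i<n} (i + 1 - α)/(i + 1)`
are.
-/

open RealInnerProductSpace

open Finset

theorem sum_mul_norm_sq_le_two_mul_sum_mul_inner {H : Type*} [NormedAddCommGroup H]
    [InnerProductSpace ℝ H] {w : ℕ → ℝ} (hw : ∀ k, w (k + 1) ≤ 0) (n : ℕ)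
    (hsum : 0 ≤ ∑ k ∈ range (n + 1), w k) (v : ℕ → H) :
    ∑ j ∈ range (n + 1), w (n - j) * ‖v j‖ ^ 2 ≤
      2 * ∑ j ∈ range (n + 1), w (n - j) * ⟪v j, v n⟫ := by
  have hpolar : 2 * ∑ j ∈ range (n + 1), w (n - j) * ⟪v j, v n⟫ -
      ∑ j ∈ range (n + 1), w (n - j) * ‖v j‖ ^ 2 =
      (∑ k ∈ range (n + 1), w k) * ‖v n‖ ^ 2 -
        ∑ j ∈ range (n + 1), w (n - j) * ‖v j - v n‖ ^ 2 := by
    rw [← sum_range_reflect w, add_tsub_cancel_right, mul_sum, sum_mul, ← sum_sub_distrib,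
      ← sum_sub_distrib]
    refine sum_congr rfl fun j _ => ?_
    linear_combination w (n - j) * norm_sub_sq_real (v j) (v n)
  have htail : ∑ j ∈ range (n + 1), w (n - j) * ‖v j - v n‖ ^ 2 ≤ 0 := by
    refine sum_nonpos fun j hj => ?_
    obtain rfl | hjn := (Nat.lt_succ_iff.mp (mem_range.mp hj)).eq_or_lt
    · simp
    · obtain ⟨k, hk⟩ : ∃ k, n - j = k + 1 := ⟨n - j - 1, by omega⟩
      rw [hk]
      exact mul_nonpos_of_nonpos_of_nonneg (hw k) (sq_nonneg _)
  nlinarith [mul_nonneg hsum (sq_nonneg ‖v n‖)]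

lemma cqWeight_eq_neg_one_pow_mul_choose (β : ℝ) (j : ℕ) :
    cqWeight β j = (-1) ^ j * Ring.choose β j := by
  rw [cqWeight, Ring.choose_eq_smul, ← descPochhammer_eval_eq_prod_range, smul_eq_mul,
    ← Polynomial.aeval_eq_smeval, Polynomial.aeval_def, ← Polynomial.eval_map,
    descPochhammer_map, div_eq_inv_mul]

lemma cqWeight_eq_prod (β : ℝ) (j : ℕ) :
    cqWeight β j = ∏ i ∈ range j, (i - β) / (i + 1) := by
  induction j with
  | zero => simp [cqWeight]
  | succ j ih =>
    rw [prod_range_succ, ← ih, cqWeight, cqWeight, prod_range_succ, Nat.factorial_succ]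
    push_cast
    field_simp
    ring

lemma cqWeight_add_one_succ (β : ℝ) (k : ℕ) :
    cqWeight (β + 1) (k + 1) = cqWeight β (k + 1) - cqWeight β k := by
  simp only [cqWeight_eq_neg_one_pow_mul_choose, Ring.choose_succ_succ, pow_succ]
  ring

lemma sum_range_succ_cqWeight_add_one (β : ℝ) (n : ℕ) :
    ∑ k ∈ range (n + 1), cqWeight (β + 1) k = cqWeight β n := by
  induction n with
  | zero => simp [cqWeight]
  | succ n ih => rw [sum_range_succ, ih, cqWeight_add_one_succ, add_sub_cancel]

lemma cqWeight_nonneg {β : ℝ} (hβ : β ≤ 0) (j : ℕ) : 0 ≤ cqWeight β j := by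
  rw [cqWeight_eq_prod]
  exact prod_nonneg fun i _ => div_nonneg (by linarith [i.cast_nonneg (α := ℝ)]) (by positivity)

lemma cqWeight_succ_nonpos {β : ℝ} (hβ0 : 0 ≤ β) (hβ1 : β ≤ 1) (k : ℕ) :
    cqWeight β (k + 1) ≤ 0 := by
  rw [cqWeight_eq_prod, prod_range_succ']
  have hrest : 0 ≤ ∏ i ∈ range k, ((i + 1 : ℕ) - β) / ((i + 1 : ℕ) + 1) :=
    prod_nonneg fun i _ => div_nonneg (by push_cast; linarith [i.cast_nonneg (α := ℝ)])
      (by positivity)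
  simp only [CharP.cast_eq_zero, zero_add, div_one]
  nlinarith

theorem stmt13_general {H : Type*} [NormedAddCommGroup H] [InnerProductSpace ℝ H]
    (α : ℝ) (hα0 : 0 < α) (hα1 : α < 1) (n : ℕ) (v : ℕ → H) :
    ∑ j ∈ Finset.range (n + 1), cqWeight α (n - j) * ‖v j‖ ^ 2 ≤
      2 * ∑ j ∈ Finset.range (n + 1), cqWeight α (n - j) * ⟪v j, v n⟫ := by
  have hpartial := sum_range_succ_cqWeight_add_one (α - 1) n
  rw [sub_add_cancel] at hpartial
  refine sum_mul_norm_sq_le_two_mul_sum_mul_inner (cqWeight_succ_nonpos hα0.le hα1.le) n ?_ v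
  exact hpartial ▸ cqWeight_nonneg (by linarith) n

/-- Discrete Alikhanov-type inequality for convolution quadrature:
`Σ_{j=0}^n a_{n-j}^{(α)} ‖v_j‖² ≤ 2 Σ_{j=0}^n a_{n-j}^{(α)} ⟨v_j, v_n⟩`. -/
theorem stmt13 {H : Type*} [NormedAddCommGroup H] [InnerProductSpace ℝ H]
    (α τ : ℝ) (hα0 : 0 < α) (hα1 : α < 1) (hτ : 0 < τ) (n : ℕ) (v : ℕ → H) :
    ∑ j ∈ Finset.range (n + 1), cqWeight α (n - j) * ‖v j‖ ^ 2 ≤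
      2 * ∑ j ∈ Finset.range (n + 1), cqWeight α (n - j) * ⟪v j, v n⟫ :=
  stmt13_general α hα0 hα1 n v
end

section
/- Discrete Cauchy–Schwarz bound for the convolution quadrature integral of order 1−α: let 0<α<1. There exists a constant C>0, depending only on α, such that for every real Hilbert space H, every τ>0, every integer j≥1, and every u_0,…,u_j ∈ H, ‖(∂_τ^{α−1} u)^j‖² ≤ C (jτ)^{1−α} (∂_τ^{α−1} g)^j where g_k=‖u_k‖²; explicitly, ‖τ^{1−α} Σ_{k=0}^j a_{j−k}^{(α−1)} u_k‖² ≤ C (jτ)^{1−α} · τ^{1−α} Σ_{k=0}^j a_{j−k}^{(α−1)} ‖u_k‖². -/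
open Finset

lemma cqWeight_eq_prod_div (β : ℝ) (j : ℕ) :
    cqWeight β j = (∏ i ∈ range j, ((i : ℝ) - β)) / j.factorial := by
  have hprod : ∏ i ∈ range j, (β - i) = (-1) ^ j * ∏ i ∈ range j, ((i : ℝ) - β) := by
    calc ∏ i ∈ range j, (β - i) = ∏ i ∈ range j, ((-1) * ((i : ℝ) - β)) :=
          prod_congr rfl fun i _ => by ring
      _ = _ := by rw [prod_mul_distrib, prod_const, card_range]
  rw [cqWeight, hprod, ← mul_div_assoc, ← mul_assoc, ← mul_pow]
  norm_num

lemma cqWeight_pos {β : ℝ} (hβ : β < 0) (j : ℕ) : 0 < cqWeight β j := by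
  rw [cqWeight_eq_prod_div]
  refine div_pos (prod_pos fun i _ => ?_) (by positivity)
  linarith [(Nat.cast_nonneg i : (0 : ℝ) ≤ i)]

lemma cqWeight_succ (β : ℝ) (j : ℕ) :
    cqWeight β (j + 1) = cqWeight β j * ((j - β) / (j + 1)) := by
  rw [cqWeight_eq_prod_div, cqWeight_eq_prod_div, prod_range_succ, Nat.factorial_succ]
  push_cast
  field_simp

/-- Pascal's rule, in the signs of `cqWeight`. -/
lemma cqWeight_sub_one_succ (β : ℝ) (j : ℕ) :
    cqWeight (β - 1) (j + 1) = cqWeight (β - 1) j + cqWeight β (j + 1) := by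
  have hβ : ∏ i ∈ range (j + 1), ((i : ℝ) - β) = (∏ i ∈ range j, ((i : ℝ) - (β - 1))) * -β := by
    rw [prod_range_succ']
    congr 1
    · exact prod_congr rfl fun i _ => by push_cast; ring
    · simp
  rw [cqWeight_eq_prod_div, cqWeight_eq_prod_div, cqWeight_eq_prod_div, hβ, prod_range_succ,
    Nat.factorial_succ]
  push_cast
  field_simp
  ring

lemma sum_range_cqWeight (β : ℝ) (j : ℕ) :
    ∑ m ∈ range (j + 1), cqWeight β m = cqWeight (β - 1) j := by
  induction j with
  | zero => simp [cqWeight]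
  | succ j ih => rw [sum_range_succ, ih, cqWeight_sub_one_succ]

lemma one_add_div_le_rpow {γ : ℝ} (hγ : 0 ≤ γ) {x : ℝ} (hx : 0 < x) :
    1 + γ / (x + 1) ≤ ((x + 1) / x) ^ γ := by
  have hlog : 1 / (x + 1) ≤ Real.log ((x + 1) / x) := by
    have h := Real.one_sub_inv_le_log_of_pos (show 0 < (x + 1) / x by positivity)
    rwa [inv_div, show 1 - x / (x + 1) = 1 / (x + 1) by field_simp; ring] at h
  calc 1 + γ / (x + 1) = γ * (1 / (x + 1)) + 1 := by ring
    _ ≤ γ * Real.log ((x + 1) / x) + 1 := by gcongr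
    _ ≤ Real.exp (Real.log ((x + 1) / x) * γ) := by
        rw [mul_comm]
        exact Real.add_one_le_exp _
    _ = ((x + 1) / x) ^ γ := (Real.rpow_def_of_pos (by positivity) γ).symm

lemma cqWeight_sub_two_le {α : ℝ} (hα : α ≤ 1) {j : ℕ} (hj : 1 ≤ j) :
    cqWeight (α - 2) j ≤ (2 - α) * (j : ℝ) ^ (1 - α) := by
  induction j, hj using Nat.le_induction with
  | base => simp [cqWeight]
  | succ j hj ih =>
    have hj0 : (0 : ℝ) < j := by exact_mod_cast hj
    have hratio : ((j : ℝ) - (α - 2)) / (j + 1) = 1 + (1 - α) / (j + 1) := by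
      field_simp
      ring
    rw [cqWeight_succ, hratio]
    calc cqWeight (α - 2) j * (1 + (1 - α) / (j + 1))
        ≤ (2 - α) * (j : ℝ) ^ (1 - α) * ((j + 1) / j) ^ (1 - α) := by
          have hγ : 0 ≤ 1 - α := by linarith
          gcongr
          · exact mul_nonneg (by linarith) (by positivity)
          · exact one_add_div_le_rpow hγ hj0
      _ = (2 - α) * ((j + 1 : ℕ) : ℝ) ^ (1 - α) := by
          rw [Real.div_rpow (by positivity) hj0.le]
          push_cast
          field_simp [(Real.rpow_pos_of_pos hj0 (1 - α)).ne']

lemma norm_sum_smul_sq_le {ι E : Type*} [SeminormedAddCommGroup E] [NormedSpace ℝ E]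
    (s : Finset ι) {w : ι → ℝ} (hw : ∀ i ∈ s, 0 ≤ w i) (u : ι → E) :
    ‖∑ i ∈ s, w i • u i‖ ^ 2 ≤ (∑ i ∈ s, w i) * ∑ i ∈ s, w i * ‖u i‖ ^ 2 := by
  have htriangle : ‖∑ i ∈ s, w i • u i‖ ≤ ∑ i ∈ s, w i * ‖u i‖ :=
    (norm_sum_le _ _).trans_eq <| sum_congr rfl fun i hi => by
      rw [norm_smul, Real.norm_of_nonneg (hw i hi)]
  calc ‖∑ i ∈ s, w i • u i‖ ^ 2 ≤ (∑ i ∈ s, w i * ‖u i‖) ^ 2 := by gcongr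
    _ ≤ _ := sum_sq_le_sum_mul_sum_of_sq_le_mul s hw
          (fun i hi => mul_nonneg (hw i hi) (sq_nonneg _)) fun i _ => le_of_eq (by ring)

lemma norm_sum_cqWeight_smul_sq_le {E : Type*} [SeminormedAddCommGroup E] [NormedSpace ℝ E]
    {α : ℝ} (hα : α < 1) {j : ℕ} (hj : 1 ≤ j) (u : ℕ → E) :
    ‖∑ k ∈ range (j + 1), cqWeight (α - 1) (j - k) • u k‖ ^ 2 ≤
      (2 - α) * (j : ℝ) ^ (1 - α) * ∑ k ∈ range (j + 1), cqWeight (α - 1) (j - k) * ‖u k‖ ^ 2 := by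
  have hsum : ∑ k ∈ range (j + 1), cqWeight (α - 1) (j - k) = cqWeight (α - 2) j := by
    rw [show α - 2 = α - 1 - 1 by ring, ← sum_range_cqWeight,
      ← sum_range_reflect (cqWeight (α - 1))]
    simp
  refine (norm_sum_smul_sq_le _ (fun k _ => (cqWeight_pos (by linarith) _).le) u).trans ?_
  rw [hsum]
  gcongr
  · exact sum_nonneg fun k _ => mul_nonneg (cqWeight_pos (by linarith) _).le (sq_nonneg _)
  · exact cqWeight_sub_two_le hα.le hj

theorem stmt17_general (α : ℝ) (hα1 : α < 1) :
    ∃ C > 0, ∀ (H : Type) [NormedAddCommGroup H] [InnerProductSpace ℝ H],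
      ∀ τ : ℝ, 0 < τ → ∀ j : ℕ, 1 ≤ j → ∀ u : ℕ → H,
        ‖τ ^ (1 - α) • ∑ k ∈ Finset.range (j + 1), cqWeight (α - 1) (j - k) • u k‖ ^ 2 ≤
          C * ((j : ℝ) * τ) ^ (1 - α) *
            (τ ^ (1 - α) *
              ∑ k ∈ Finset.range (j + 1), cqWeight (α - 1) (j - k) * ‖u k‖ ^ 2) := by
  refine ⟨2 - α, by linarith, fun H _ _ τ hτ j hj u => ?_⟩
  have hτα : 0 < τ ^ (1 - α) := Real.rpow_pos_of_pos hτ _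
  rw [norm_smul, Real.norm_of_nonneg hτα.le, mul_pow, Real.mul_rpow (Nat.cast_nonneg j) hτ.le]
  calc (τ ^ (1 - α)) ^ 2 * ‖∑ k ∈ range (j + 1), cqWeight (α - 1) (j - k) • u k‖ ^ 2
      ≤ (τ ^ (1 - α)) ^ 2 * ((2 - α) * (j : ℝ) ^ (1 - α) *
          ∑ k ∈ range (j + 1), cqWeight (α - 1) (j - k) * ‖u k‖ ^ 2) := by
        gcongr
        exact norm_sum_cqWeight_smul_sq_le hα1 hj u
    _ = _ := by ring

/-- Discrete Cauchy–Schwarz bound for the convolution quadrature integral of order `1-α`: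
`‖(∂_τ^{α-1} u)^j‖² ≤ C (jτ)^{1-α} (∂_τ^{α-1} ‖u‖²)^j`, with `C` depending only on `α`. -/
theorem stmt17 (α : ℝ) (hα0 : 0 < α) (hα1 : α < 1) :
    ∃ C > 0, ∀ (H : Type) [NormedAddCommGroup H] [InnerProductSpace ℝ H],
      ∀ τ : ℝ, 0 < τ → ∀ j : ℕ, 1 ≤ j → ∀ u : ℕ → H,
        ‖τ ^ (1 - α) • ∑ k ∈ Finset.range (j + 1), cqWeight (α - 1) (j - k) • u k‖ ^ 2 ≤
          C * ((j : ℝ) * τ) ^ (1 - α) *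
            (τ ^ (1 - α) *
              ∑ k ∈ Finset.range (j + 1), cqWeight (α - 1) (j - k) * ‖u k‖ ^ 2) :=
  stmt17_general α hα1
end
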